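/- Let Σ be a positive definite real p×p matrix whose inverse P = Σ⁻¹ has an acyclic sparsity graph (a forest), let S be the diagonal matrix with entries S_{jj} = 1/P_{jj}, and assume the 2p×2p block matrix underline-Σ = [[Σ, Σ−S],[Σ−S, Σ]] is invertible. Then for every j ∈ {1,…,p}, the (j,j) entry of (underline-Σ)⁻¹ equals (P_{jj})² · Σ_{jj}. -/

import Mathlib

/-!
Write `D = diag(P_jj)`, so `S = D⁻¹`. The extended covariance `[[A, B], [B, A]]` is
block-diagonalised by `A ± B`; here `A - B = S` and `A + B = 2Σ - S`, so its top-left inverse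
block is `((2Σ - S)⁻¹ + D) / 2`. A forest is bipartite, and conjugating `P` by the diagonal
`±1` matrix `E` of a 2-colouring flips exactly the signs of its off-diagonal entries:
`EPE = 2D - P`. Hence `2Σ - S = Σ (EPE) S`, whose inverse is `2 D (EΣE) D - D`, and the
top-left block is `D (EΣE) D`, with diagonal entries `P_jj² Σ_jj`.
-/

open Matrix

namespace SimpleGraph.Coloring

variable {V : Type*} {G : SimpleGraph V} {R : Type*} [Ring R]

def sign (c : G.Coloring (Fin 2)) (v : V) : R := (-1) ^ (c v : ℕ)

theorem sign_mul_self (c : G.Coloring (Fin 2)) (v : V) : c.sign v * c.sign v = (1 : R) := by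
  simp [sign, ← pow_add, ← two_mul]

theorem sign_mul_sign_of_adj (c : G.Coloring (Fin 2)) {u v : V} (h : G.Adj u v) :
    c.sign u * c.sign v = (-1 : R) := by
  have hne := c.valid h
  unfold sign
  rcases Fin.exists_fin_two.mp ⟨c u, rfl⟩ with hu | hu <;>
    rcases Fin.exists_fin_two.mp ⟨c v, rfl⟩ with hv | hv <;> simp_all

end SimpleGraph.Coloring

namespace Matrix

variable {n : Type*} [Fintype n] [DecidableEq n]

theorem add_diagonal_sign_mul_mul_diagonal_sign {R : Type*} [CommRing R]
    {G : SimpleGraph n} (c : G.Coloring (Fin 2)) (P : Matrix n n R)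
    (hP : ∀ i j, i ≠ j → P i j ≠ 0 → G.Adj i j) :
    P + diagonal (c.sign : n → R) * P * diagonal c.sign = 2 • diagonal P.diag := by
  ext i j
  simp only [add_apply, mul_diagonal, diagonal_mul, smul_apply, diagonal_apply, diag_apply]
  by_cases hij : i = j
  · subst hij
    simp only [if_true, nsmul_eq_mul]
    linear_combination P i i * c.sign_mul_self (R := R) i
  · rw [if_neg hij, smul_zero]
    by_cases hPij : P i j = 0
    · simp [hPij]
    · linear_combination P i j * c.sign_mul_sign_of_adj (R := R) (hP i j hij hPij)

theorem two_smul_sub_mul_two_smul_sub_eq_one {R : Type*} [CommRing R]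
    {Sigma P Sigma' P' D S : Matrix n n R} (hP : Sigma * P = 1) (hP' : Sigma' * P' = 1)
    (hS : D * S = 1) (hPP' : P + P' = 2 • D) :
    (2 • Sigma - S) * (2 • (D * Sigma' * D) - D) = 1 := by
  have hP'D : P' = 2 • D - P := eq_sub_of_add_eq' hPP'
  have hfactor : 2 • Sigma - S = Sigma * P' * S := by
    rw [hP'D, mul_sub, sub_mul, mul_smul_comm, smul_mul_assoc, mul_assoc, hS, hP, mul_one,
      one_mul]
  have hfactor' : 2 • (D * Sigma' * D) - D = D * Sigma' * P := by
    rw [eq_sub_of_add_eq hPP', mul_sub, mul_smul_comm, mul_assoc D Sigma' P', hP', mul_one]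
  rw [hfactor, hfactor']
  calc Sigma * P' * S * (D * Sigma' * P) = Sigma * (P' * ((S * D) * Sigma') * P) := by
        simp only [mul_assoc]
    _ = 1 := by rw [mul_eq_one_comm.mp hS, one_mul, mul_eq_one_comm.mp hP', one_mul, hP]

theorem inv_fromBlocks_symm {K : Type*} [Field K] [NeZero (2 : K)] {A B X Y : Matrix n n K}
    (hX : (A + B) * X = 1) (hY : (A - B) * Y = 1) :
    (fromBlocks A B B A)⁻¹ = (2⁻¹ : K) • fromBlocks (X + Y) (X - Y) (X - Y) (X + Y) := by
  have h₁ : A * (X + Y) + B * (X - Y) = (2 : K) • 1 :=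
    calc A * (X + Y) + B * (X - Y) = (A + B) * X + (A - B) * Y := by noncomm_ring
      _ = (2 : K) • 1 := by rw [hX, hY, two_smul]
  have h₀ : A * (X - Y) + B * (X + Y) = 0 :=
    calc A * (X - Y) + B * (X + Y) = (A + B) * X - (A - B) * Y := by noncomm_ring
      _ = 0 := by rw [hX, hY, sub_self]
  refine inv_eq_right_inv ?_
  rw [mul_smul_comm, fromBlocks_multiply, h₁, h₀, add_comm (B * _), add_comm (B * _), h₁, h₀]
  ext (i | i) (j | j) <;> simp [one_apply, two_ne_zero]

end Matrix

theorem stmt10_general {p : ℕ} (Sigma : Matrix (Fin p) (Fin p) ℝ) (hSigma : Sigma.PosDef)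
    (P : Matrix (Fin p) (Fin p) ℝ) (hP : P = Sigma⁻¹)
    (G : SimpleGraph (Fin p)) (hG : ∀ i j, G.Adj i j ↔ i ≠ j ∧ P i j ≠ 0)
    (hforest : G.IsAcyclic)
    (S : Matrix (Fin p) (Fin p) ℝ) (hS : S = Matrix.diagonal (fun j => (P j j)⁻¹)) :
    ∀ j : Fin p,
      (Matrix.fromBlocks Sigma (Sigma - S) (Sigma - S) Sigma)⁻¹ (Sum.inl j) (Sum.inl j) =
        (P j j) ^ 2 * Sigma j j := by
  intro j
  have hSigmaP : Sigma * P = 1 := hP ▸ mul_nonsing_inv _ hSigma.det_pos.ne'.isUnit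
  have hDS : diagonal P.diag * S = 1 := by
    have hPdiag : ∀ i, P i i ≠ 0 := fun i => (hP ▸ hSigma.inv).diag_pos.ne'
    simp [hS, hPdiag]
  set E : Matrix (Fin p) (Fin p) ℝ := diagonal hforest.coloringTwo.sign
  have hEE : E * E = 1 := by simp [E, SimpleGraph.Coloring.sign_mul_self]
  have hconj : (E * Sigma * E) * (E * P * E) = 1 := by
    simp only [mul_assoc, ← mul_assoc E E, hEE, one_mul, ← mul_assoc Sigma P, hSigmaP]
  have hX := two_smul_sub_mul_two_smul_sub_eq_one hSigmaP hconj hDS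
    (add_diagonal_sign_mul_mul_diagonal_sign _ P fun i j hij hPij => (hG i j).2 ⟨hij, hPij⟩)
  rw [inv_fromBlocks_symm (X := 2 • _ - _) (Y := diagonal P.diag)
    (by rwa [two_smul, add_sub_assoc] at hX) (by rw [sub_sub_cancel, mul_eq_one_comm, hDS])]
  simp only [fromBlocks_apply₁₁, Matrix.smul_apply, sub_add_cancel, E, mul_diagonal,
    diagonal_mul, diag_apply, smul_eq_mul]
  linear_combination P j j ^ 2 * Sigma j j * hforest.coloringTwo.sign_mul_self (R := ℝ) j

/-- Theorem 6: for the conditional independence knockoff on a tree (forest)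
Gaussian graphical model, the diagonal entries of the extended precision matrix
are `P_jj² · Σ_jj`. -/
theorem stmt10 {p : ℕ} (Sigma : Matrix (Fin p) (Fin p) ℝ) (hSigma : Sigma.PosDef)
    (P : Matrix (Fin p) (Fin p) ℝ) (hP : P = Sigma⁻¹)
    (G : SimpleGraph (Fin p)) (hG : ∀ i j, G.Adj i j ↔ i ≠ j ∧ P i j ≠ 0)
    (hforest : G.IsAcyclic)
    (S : Matrix (Fin p) (Fin p) ℝ) (hS : S = Matrix.diagonal (fun j => (P j j)⁻¹))
    (hinv : IsUnit (Matrix.fromBlocks Sigma (Sigma - S) (Sigma - S) Sigma).det) :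
    ∀ j : Fin p,
      (Matrix.fromBlocks Sigma (Sigma - S) (Sigma - S) Sigma)⁻¹ (Sum.inl j) (Sum.inl j) =
        (P j j) ^ 2 * Sigma j j :=
  stmt10_general Sigma hSigma P hP G hG hforest S hS
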